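/- Let ε > 0, p ∈ Δ(K) with p(k) > 0 for all k ∈ K, and let x be a mixed action that is ε-concise at p. Then for every i ∈ NR[x,ε,p], ‖p^x(·|i) − p‖₁ ≤ 2·‖1/p‖_∞·(x̄^p(R[x,ε,p]) / x̄^p(NR[x,ε,p])), where ‖1/p‖_∞ := max_{k∈K} 1/p(k). -/

import Mathlib

/-! Conciseness makes `x(i|k)` proportional to `x(NR|k)` on `NR`, so the posterior of a
non-revealing `i` is `p(k)·x(NR|k)/x̄(NR)`. As the mass of `x(·|k)` and of `x̄` outside `NR ∪ R`
is zero, `x(NR|k) = 1 - x(R|k)` and `x̄(NR) = 1 - x̄(R)`, whence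
`p^x(k|i) - p(k) = p(k)·(x̄(R) - x(R|k))/x̄(NR)`. Since `x̄(R)` is the `p`-mean of the nonnegative
`x(R|·)`, the `p`-weighted absolute deviation is at most `2·x̄(R)`; and `‖1/p‖_∞ ≥ 1`. -/

open Finset

noncomputable section
open Classical

/-- `p` is an element of the probability simplex Δ(K). -/
def pSimplex {K : Type*} [Fintype K] (p : K → ℝ) : Prop :=
  (∀ k, 0 ≤ p k) ∧ ∑ k, p k = 1

/-- `x : K → Δ(I)` is a mixed action, written `x k i = x(i|k)`. -/
def MixedAction {K I : Type*} [Fintype K] [Fintype I] (x : K → I → ℝ) : Prop :=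
  (∀ k i, 0 ≤ x k i) ∧ ∀ k, ∑ i, x k i = 1

/-- Marginal `x̄^p(i) = ∑_k p(k)·x(i|k)`. -/
def bar {K I : Type*} [Fintype K] (p : K → ℝ) (x : K → I → ℝ) (i : I) : ℝ :=
  ∑ k, p k * x k i

/-- Posterior `p^x(k|i)`. -/
def post {K I : Type*} [Fintype K] (p : K → ℝ) (x : K → I → ℝ) (i : I) (k : K) : ℝ :=
  if bar p x i ≠ 0 then x k i * p k / bar p x i else p k

/-- The set `NR[x,ε,p]` of (x,ε)-non-revealing actions at p. -/
def NRset {K I : Type*} [Fintype K] [Fintype I] (x : K → I → ℝ) (ε : ℝ) (p : K → ℝ) :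
    Finset I :=
  Finset.univ.filter fun i =>
    bar p x i ≠ 0 ∧ ∀ k, (1 - ε) * bar p x i ≤ x k i ∧ x k i ≤ (1 + ε) * bar p x i

/-- The set `R[x,ε,p]` of (x,ε)-revealing actions at p. -/
def Rset {K I : Type*} [Fintype K] [Fintype I] (x : K → I → ℝ) (ε : ℝ) (p : K → ℝ) :
    Finset I :=
  (Finset.univ.filter fun i => bar p x i ≠ 0) \ NRset x ε p

/-- `x(A|k) = ∑_{i∈A} x(i|k)`. -/
def xOn {K I : Type*} (x : K → I → ℝ) (A : Finset I) (k : K) : ℝ := ∑ i ∈ A, x k i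

/-- `x̄^p(A) = ∑_{i∈A} x̄^p(i)`. -/
def barOn {K I : Type*} [Fintype K] (p : K → ℝ) (x : K → I → ℝ) (A : Finset I) : ℝ :=
  ∑ i ∈ A, bar p x i

/-- The ε-silent mapping `c_ε(x,p)`. -/
def silent {K I : Type*} [Fintype K] [Fintype I] (ε : ℝ) (x : K → I → ℝ) (p : K → ℝ) :
    K → I → ℝ :=
  fun k i =>
    if i ∈ NRset x ε p then
      ((1 - ε) * xOn x (NRset x ε p) k / barOn p x (NRset x ε p) + ε) * bar p x i
    else (1 - ε) * x k i + ε * bar p x i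

section

variable {K I : Type*} [Fintype K] {p : K → ℝ} {x : K → I → ℝ}

lemma bar_nonneg [Fintype I] (hp : ∀ k, 0 ≤ p k) (hx : MixedAction x) (i : I) : 0 ≤ bar p x i :=
  sum_nonneg fun k _ => mul_nonneg (hp k) (hx.1 k i)

lemma sum_mul_xOn (p : K → ℝ) (x : K → I → ℝ) (A : Finset I) :
    ∑ k, p k * xOn x A k = barOn p x A := by
  simp only [xOn, barOn, bar, mul_sum]
  exact sum_comm

lemma MixedAction.eq_zero_of_bar_eq_zero [Fintype I] (hx : MixedAction x)
    (hpos : ∀ k, 0 < p k) {i : I} (h : bar p x i = 0) (k : K) : x k i = 0 :=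
  (mul_eq_zero.mp <| (sum_eq_zero_iff_of_nonneg fun k _ => mul_nonneg (hpos k).le (hx.1 k i)).mp h
    k (mem_univ k)).resolve_left (hpos k).ne'

lemma NRset_subset_support [Fintype I] (ε : ℝ) :
    NRset x ε p ⊆ univ.filter fun i => bar p x i ≠ 0 :=
  fun _ hi => mem_filter.mpr ⟨mem_univ _, (mem_filter.mp hi).2.1⟩

lemma sum_NRset_add_sum_Rset [Fintype I] (ε : ℝ) {f : I → ℝ}
    (hf : ∀ i, bar p x i = 0 → f i = 0) :
    ∑ i ∈ NRset x ε p, f i + ∑ i ∈ Rset x ε p, f i = ∑ i, f i := by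
  rw [Rset, add_comm, sum_sdiff (NRset_subset_support ε), sum_filter_of_ne]
  exact fun i _ hfi hbar => hfi (hf i hbar)

lemma MixedAction.xOn_NRset_add_xOn_Rset [Fintype I] (hx : MixedAction x)
    (hpos : ∀ k, 0 < p k) (ε : ℝ) (k : K) : xOn x (NRset x ε p) k + xOn x (Rset x ε p) k = 1 := by
  rw [xOn, xOn, sum_NRset_add_sum_Rset ε fun i h => hx.eq_zero_of_bar_eq_zero hpos h k, hx.2 k]

lemma MixedAction.barOn_NRset_add_barOn_Rset [Fintype I] (hx : MixedAction x) (hp : pSimplex p)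
    (ε : ℝ) :
    barOn p x (NRset x ε p) + barOn p x (Rset x ε p) = 1 := by
  rw [barOn, barOn, sum_NRset_add_sum_Rset ε fun _ h => h, ← hp.2]
  simp only [bar]
  rw [sum_comm]
  simp only [← mul_sum, hx.2, mul_one]

lemma post_eq_of_eq_mul_bar {i : I} (hi : bar p x i ≠ 0) {k : K} {c : ℝ}
    (h : x k i = c * bar p x i) : post p x i k = c * p k := by
  rw [post, if_pos hi, h]
  field_simp

lemma sum_mul_abs_mean_sub_le (hp : pSimplex p) {y : K → ℝ} (hy : ∀ k, 0 ≤ y k) :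
    ∑ k, p k * |∑ j, p j * y j - y k| ≤ 2 * ∑ k, p k * y k := by
  have hmean : 0 ≤ ∑ j, p j * y j := sum_nonneg fun j _ => mul_nonneg (hp.1 j) (hy j)
  calc ∑ k, p k * |∑ j, p j * y j - y k|
      ≤ ∑ k, p k * (∑ j, p j * y j + y k) := by
        gcongr with k
        · exact hp.1 k
        · rw [abs_le]; constructor <;> linarith [hy k]
    _ = 2 * ∑ k, p k * y k := by
        rw [sum_congr rfl fun k _ => mul_add (p k) _ _, sum_add_distrib, ← sum_mul, hp.2]
        ring

lemma pSimplex.one_le_sup'_one_div [Nonempty K] (hp : pSimplex p) (hpos : ∀ k, 0 < p k) :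
    1 ≤ univ.sup' univ_nonempty fun k => 1 / p k := by
  obtain ⟨k⟩ := ‹Nonempty K›
  have hpk : p k ≤ 1 := hp.2 ▸ single_le_sum (fun k _ => hp.1 k) (mem_univ k)
  exact (one_le_one_div (hpos k) hpk).trans (le_sup' (fun k => 1 / p k) (mem_univ k))

end

theorem concise_nonrevealing_posterior_close_general {K I : Type*} [Fintype K] [Fintype I]
    [Nonempty K]
    (ε : ℝ)
    (p : K → ℝ) (hp : pSimplex p) (hpos : ∀ k, 0 < p k)
    (x : K → I → ℝ) (hx : MixedAction x)
    (hconc : ∀ i ∈ NRset x ε p, ∀ k : K,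
      x k i = xOn x (NRset x ε p) k / barOn p x (NRset x ε p) * bar p x i) :
    ∀ i ∈ NRset x ε p,
      ∑ k, |post p x i k - p k| ≤
        2 * (Finset.univ.sup' Finset.univ_nonempty fun k => 1 / p k) *
          (barOn p x (Rset x ε p) / barOn p x (NRset x ε p)) := by
  intro i hi
  set N := barOn p x (NRset x ε p)
  set R := barOn p x (Rset x ε p)
  have hi_bar : bar p x i ≠ 0 := (mem_filter.mp hi).2.1
  have hN : 0 < N := ((bar_nonneg hp.1 hx i).lt_of_ne' hi_bar).trans_le
    (single_le_sum (fun j _ => bar_nonneg hp.1 hx j) hi)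
  have hpost : ∀ k, post p x i k - p k = p k * (R - xOn x (Rset x ε p) k) / N := fun k => by
    rw [post_eq_of_eq_mul_bar hi_bar (hconc i hi k)]
    field_simp
    linear_combination p k * hx.xOn_NRset_add_xOn_Rset hpos ε k
      - p k * hx.barOn_NRset_add_barOn_Rset hp ε
  calc ∑ k, |post p x i k - p k|
      = (∑ k, p k * |R - xOn x (Rset x ε p) k|) / N := by
        simp only [hpost, abs_div, abs_mul, abs_of_pos hN, abs_of_pos (hpos _), sum_div]
    _ ≤ 2 * R / N := by
        gcongr
        have h := sum_mul_abs_mean_sub_le hp (y := xOn x (Rset x ε p))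
          fun k => sum_nonneg fun j _ => hx.1 k j
        rwa [sum_mul_xOn] at h
    _ = 2 * 1 * (R / N) := by ring
    _ ≤ _ := by
        have hRN : 0 ≤ R / N := div_nonneg (sum_nonneg fun j _ => bar_nonneg hp.1 hx j) hN.le
        gcongr
        exact hp.one_le_sup'_one_div hpos

/-- for an ε-concise action, non-revealing posteriors stay close to p. -/
theorem concise_nonrevealing_posterior_close {K I : Type*} [Fintype K] [Fintype I]
    [Nonempty K] [Nonempty I]
    (ε : ℝ) (hε : 0 < ε)
    (p : K → ℝ) (hp : pSimplex p) (hpos : ∀ k, 0 < p k)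
    (x : K → I → ℝ) (hx : MixedAction x)
    (hconc : ∀ i ∈ NRset x ε p, ∀ k : K,
      x k i = xOn x (NRset x ε p) k / barOn p x (NRset x ε p) * bar p x i) :
    ∀ i ∈ NRset x ε p,
      ∑ k, |post p x i k - p k| ≤
        2 * (Finset.univ.sup' Finset.univ_nonempty fun k => 1 / p k) *
          (barOn p x (Rset x ε p) / barOn p x (NRset x ε p)) :=
  concise_nonrevealing_posterior_close_general ε p hp hpos x hx hconc
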